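/- Every element a of Cl(p+1,q+1) admits a unique decomposition a = P₊a₀⁺ + P₊e a₁⁺ + P₋a₀⁻ + P₋e a₁⁻ with a₀⁺, a₁⁺, a₀⁻, a₁⁻ in the subalgebra generated by vectors orthogonal to e and ẽ. Explicitly, if a = A₀₀ + e A₀₁ + ẽ A₁₀ + ẽe A₁₁, then a₀⁺ = A₀₀ + A₁₁, a₁⁺ = A₀₁ + A₁₀, a₀⁻ = A₀₀ − A₁₁, a₁⁻ = A₀₁ − A₁₀. -/

import Mathlib

open CliffordAlgebra QuadraticMap

noncomputable section Stmt8Aux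

variable {K V : Type*} [Field K] [AddCommGroup V] [Module K V]

/-- half-polar coefficient functional -/
def stmt8cc (Q : QuadraticForm K V) (x : V) : V →ₗ[K] K :=
  (2:K)⁻¹ • (LinearMap.flip (QuadraticMap.polarBilin Q) x)

lemma stmt8cc_apply (Q : QuadraticForm K V) (x v : V) :
    stmt8cc Q x v = (2:K)⁻¹ * polar Q v x := by
  simp [stmt8cc, smul_eq_mul]

/-- the orthogonal part -/
def stmt8w (Q : QuadraticForm K V) (e f : V) : V →ₗ[K] V :=
  LinearMap.id - (stmt8cc Q e).smulRight e + (stmt8cc Q f).smulRight f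

lemma stmt8w_apply (Q : QuadraticForm K V) (e f v : V) :
    stmt8w Q e f v = v - (stmt8cc Q e v) • e + (stmt8cc Q f v) • f := by
  simp [stmt8w]

def stmt8m (Q : QuadraticForm K V) (e f : V) :
    V →ₗ[K] Matrix (Fin 2) (Fin 2) (CliffordAlgebra Q) :=
  ((LinearMap.toSpanSingleton (CliffordAlgebra Q) _ (!![1,0;0,-1] : Matrix (Fin 2) (Fin 2) (CliffordAlgebra Q))).restrictScalars K).comp
      ((CliffordAlgebra.ι Q).comp (stmt8w Q e f))
  + (stmt8cc Q e).smulRight !![0,1;1,0]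
  + (- stmt8cc Q f).smulRight !![0,1;-1,0]

set_option maxHeartbeats 1000000 in
lemma stmt8m_apply (Q : QuadraticForm K V) (e f v : V) :
    stmt8m Q e f v =
      !![ι Q (stmt8w Q e f v), algebraMap K _ (stmt8cc Q e v - stmt8cc Q f v);
         algebraMap K _ (stmt8cc Q e v + stmt8cc Q f v), - ι Q (stmt8w Q e f v)] := by
  ext i j
  fin_cases i <;> fin_cases j <;>
    simp [stmt8m, Algebra.algebraMap_eq_smul_one, sub_eq_add_neg, add_smul, neg_smul]


variable {Q : QuadraticForm K V} {e f : V}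

lemma stmt8w_polar_e (hK : (2:K) ≠ 0) (he : Q e = 1) (horth : polar Q e f = 0) (v : V) :
    polar Q (stmt8w Q e f v) e = 0 := by
  simp only [stmt8w_apply, stmt8cc_apply]
  rw [polar_add_left, polar_sub_left, polar_smul_left, polar_smul_left, polar_self,
    polar_comm Q f e, horth, he]
  simp
  field_simp
  ring

lemma stmt8w_polar_f (hK : (2:K) ≠ 0) (hf : Q f = -1) (horth : polar Q e f = 0) (v : V) :
    polar Q (stmt8w Q e f v) f = 0 := by
  simp only [stmt8w_apply, stmt8cc_apply]
  rw [polar_add_left, polar_sub_left, polar_smul_left, polar_smul_left, polar_self,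
    horth, hf]
  simp
  field_simp
  ring

lemma stmt8Q (he : Q e = 1) (hf : Q f = -1) (horth : polar Q e f = 0)
    (hK : (2:K) ≠ 0) (v : V) :
    Q v = (stmt8cc Q e v + stmt8cc Q f v) * (stmt8cc Q e v - stmt8cc Q f v)
      + Q (stmt8w Q e f v) := by
  have hv : v = (stmt8cc Q e v) • e + (-(stmt8cc Q f v)) • f + stmt8w Q e f v := by
    rw [stmt8w_apply]; module
  set a := stmt8cc Q e v with ha
  set b := stmt8cc Q f v with hb
  have h1 : polar Q ((a) • e + (-b) • f) (stmt8w Q e f v) = 0 := by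
    rw [polar_comm, polar_add_right, polar_smul_right, polar_smul_right,
      polar_comm Q _ e, polar_comm Q _ f]
    rw [polar_comm Q e _, polar_comm Q f _, stmt8w_polar_e hK he horth,
      stmt8w_polar_f hK hf horth]
    simp
  conv_lhs => rw [hv]
  rw [QuadraticMap.map_add Q, h1, QuadraticMap.map_add Q, QuadraticMap.map_smul,
    QuadraticMap.map_smul, polar_smul_left, polar_smul_right, he, hf, horth]
  simp only [smul_eq_mul]
  ring

lemma stmt8hm (hK : (2:K) ≠ 0) (he : Q e = 1) (hf : Q f = -1)
    (horth : polar Q e f = 0) (v : V) :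
    stmt8m Q e f v * stmt8m Q e f v
      = algebraMap K (Matrix (Fin 2) (Fin 2) (CliffordAlgebra Q)) (Q v) := by
  rw [stmt8m_apply, Matrix.mul_fin_two, stmt8Q he hf horth hK v]
  have hx : ι Q (stmt8w Q e f v) * ι Q (stmt8w Q e f v)
      = algebraMap K _ (Q (stmt8w Q e f v)) := ι_sq_scalar Q _
  ext i j
  fin_cases i <;> fin_cases j <;>
    simp [hx, ← _root_.map_sub, ← _root_.map_mul, ← _root_.map_add, Algebra.commutes,
      Matrix.algebraMap_matrix_apply] <;>
    (try (congr 1; ring))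

lemma stmt8m_orth {w : V} (hw1 : polar Q w e = 0) (hw2 : polar Q w f = 0) :
    stmt8m Q e f w = !![ι Q w, 0; 0, - ι Q w] := by
  rw [stmt8m_apply]
  simp [stmt8w_apply, stmt8cc_apply, hw1, hw2]

lemma stmt8m_e (hK : (2:K) ≠ 0) (he : Q e = 1) (horth : polar Q e f = 0) :
    stmt8m Q e f e = !![0,1;1,0] := by
  have h1 : stmt8cc Q e e = 1 := by
    rw [stmt8cc_apply, polar_self, he]; simp; field_simp
  have h2 : stmt8cc Q f e = 0 := by
    rw [stmt8cc_apply, horth]; simp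
  rw [stmt8m_apply, h1, h2, stmt8w_apply, h1, h2]
  simp

lemma stmt8m_f (hK : (2:K) ≠ 0) (hf : Q f = -1) (horth : polar Q e f = 0) :
    stmt8m Q e f f = !![0,1;-1,0] := by
  have h1 : stmt8cc Q e f = 0 := by
    rw [stmt8cc_apply, polar_comm, horth]; simp
  have h2 : stmt8cc Q f f = -1 := by
    rw [stmt8cc_apply, polar_self, hf]; simp; field_simp
  rw [stmt8m_apply, h1, h2, stmt8w_apply, h1, h2]
  simp

lemma stmt8_key {A : Type*} [Ring A] [Algebra K A]
    (hK : (2:K) ≠ 0) (E T : A) (hEE : E * E = 1)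
    (A00 A01 A10 A11 : A) :
    ((2:K)⁻¹ • (1 + T*E)) * (A00 + A11) + ((2:K)⁻¹ • (1 + T*E)) * E * (A01 + A10) +
    ((2:K)⁻¹ • (1 - T*E)) * (A00 - A11) + ((2:K)⁻¹ • (1 - T*E)) * E * (A01 - A10)
    = A00 + E*A01 + T*A10 + T*E*A11 := by
  have hEE' : ∀ x : A, E * (E * x) = x := fun x => by rw [← mul_assoc, hEE, one_mul]
  have h : (1 + T*E) * (A00 + A11) + ((1 + T*E) * E) * (A01 + A10) +
      (1 - T*E) * (A00 - A11) + ((1 - T*E) * E) * (A01 - A10)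
      = (2:K) • (A00 + E*A01 + T*A10 + T*E*A11) := by
    simp only [add_mul, sub_mul, mul_add, mul_sub, one_mul, mul_assoc, hEE', two_smul,
      smul_add]
    abel
  simp only [smul_mul_assoc]
  rw [← smul_add, ← smul_add, ← smul_add, h, smul_smul,
    inv_mul_cancel₀ hK, one_smul]

end Stmt8Aux

set_option maxHeartbeats 1000000


/-- Every element of `Cl(p+1,q+1)` has a unique right-ideal
decomposition `a = Pp a₀⁺ + Pp e a₁⁺ + Pm a₀⁻ + Pm e a₁⁻` with coefficients in
the subalgebra `S` generated by the vectors orthogonal to `e` and `f`, and if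
`a = A₀₀ + e A₀₁ + f A₁₀ + f e A₁₁` then the coefficients are
`A₀₀ + A₁₁, A₀₁ + A₁₀, A₀₀ - A₁₁, A₀₁ - A₁₀`.  The hypothesis `hspan` says that
`V` is spanned by `e`, `f` and their orthogonal complement. -/
theorem stmt8 {K V : Type*} [Field K] [AddCommGroup V] [Module K V]
    (hK : (2 : K) ≠ 0) (Q : QuadraticForm K V) (e f : V)
    (he : Q e = 1) (hf : Q f = -1) (horth : QuadraticMap.polar Q e f = 0)
    (hspan : ∀ v : V, ∃ c₁ c₂ : K, ∃ w : V,
      QuadraticMap.polar Q w e = 0 ∧ QuadraticMap.polar Q w f = 0 ∧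
      v = c₁ • e + c₂ • f + w)
    (S : Subalgebra K (CliffordAlgebra Q))
    (hS : S = Algebra.adjoin K (ι Q ''
      {v : V | QuadraticMap.polar Q v e = 0 ∧ QuadraticMap.polar Q v f = 0}))
    (E T Pp Pm : CliffordAlgebra Q)
    (hE : E = ι Q e) (hT : T = ι Q f)
    (hPp : Pp = (2 : K)⁻¹ • (1 + T * E)) (hPm : Pm = (2 : K)⁻¹ • (1 - T * E))
    (a : CliffordAlgebra Q) :
    (∃! x : S × S × S × S,
      a = Pp * (x.1 : CliffordAlgebra Q) + Pp * E * (x.2.1 : CliffordAlgebra Q) +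
          Pm * (x.2.2.1 : CliffordAlgebra Q) + Pm * E * (x.2.2.2 : CliffordAlgebra Q)) ∧
    (∀ A00 A01 A10 A11 : CliffordAlgebra Q, A00 ∈ S → A01 ∈ S → A10 ∈ S → A11 ∈ S →
      a = A00 + E * A01 + T * A10 + T * E * A11 →
      a = Pp * (A00 + A11) + Pp * E * (A01 + A10) +
          Pm * (A00 - A11) + Pm * E * (A01 - A10)) := by
  subst hE hT hPp hPm
  -- basic multiplication facts
  have hEE : ι Q e * ι Q e = 1 := by rw [ι_sq_scalar, he, map_one]
  have hTT : ι Q f * ι Q f = -1 := by rw [ι_sq_scalar, hf, _root_.map_neg, map_one]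
  have hET : ι Q e * ι Q f = -(ι Q f * ι Q e) := by
    have h := ι_mul_ι_add_swap (Q := Q) e f
    rw [horth, map_zero] at h
    exact eq_neg_of_add_eq_zero_left h
  have hEE' : ∀ x : CliffordAlgebra Q, ι Q e * (ι Q e * x) = x := fun x => by
    rw [← mul_assoc, hEE, one_mul]
  have hTT' : ∀ x : CliffordAlgebra Q, ι Q f * (ι Q f * x) = -x := fun x => by
    rw [← mul_assoc, hTT, neg_one_mul]
  have hET' : ∀ x : CliffordAlgebra Q, ι Q e * (ι Q f * x) = -(ι Q f * (ι Q e * x)) :=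
    fun x => by rw [← mul_assoc, hET, neg_mul, mul_assoc]
  have hwE' : ∀ w : V, QuadraticMap.polar Q w e = 0 →
      ∀ x : CliffordAlgebra Q, ι Q w * (ι Q e * x) = -(ι Q e * (ι Q w * x)) := by
    intro w hw x
    have h := ι_mul_ι_add_swap (Q := Q) w e
    rw [hw, map_zero] at h
    rw [← mul_assoc, eq_neg_of_add_eq_zero_left h, neg_mul, mul_assoc]
  have hwF' : ∀ w : V, QuadraticMap.polar Q w f = 0 →
      ∀ x : CliffordAlgebra Q, ι Q w * (ι Q f * x) = -(ι Q f * (ι Q w * x)) := by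
    intro w hw x
    have h := ι_mul_ι_add_swap (Q := Q) w f
    rw [hw, map_zero] at h
    rw [← mul_assoc, eq_neg_of_add_eq_zero_left h, neg_mul, mul_assoc]
  have hιS : ∀ w : V, QuadraticMap.polar Q w e = 0 → QuadraticMap.polar Q w f = 0 →
      ι Q w ∈ S := by
    intro w h1 h2
    rw [hS]
    exact Algebra.subset_adjoin ⟨w, ⟨h1, h2⟩, rfl⟩
  -- the matrix representation
  obtain ⟨Φ, hΦ⟩ : ∃ Φ : CliffordAlgebra Q →ₐ[K] Matrix (Fin 2) (Fin 2) (CliffordAlgebra Q),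
      ∀ v, Φ (ι Q v) = stmt8m Q e f v :=
    ⟨lift Q ⟨stmt8m Q e f, stmt8hm hK he hf horth⟩, fun v => lift_ι_apply _ _ _⟩
  have hΦe : Φ (ι Q e) = !![0,1;1,0] := by rw [hΦ, stmt8m_e hK he horth]
  have hΦf : Φ (ι Q f) = !![0,1;-1,0] := by rw [hΦ, stmt8m_f hK hf horth]
  have hΦs : ∀ s : CliffordAlgebra Q, s ∈ S → Φ s = !![s, 0; 0, involute s] := by
    intro s hs
    rw [hS] at hs
    induction hs using Algebra.adjoin_induction with
    | mem x hx =>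
      obtain ⟨w, ⟨h1, h2⟩, rfl⟩ := hx
      rw [hΦ, stmt8m_orth h1 h2, involute_ι]
    | algebraMap r =>
      rw [AlgHom.commutes]
      ext i j
      fin_cases i <;> fin_cases j <;>
        simp [Matrix.algebraMap_matrix_apply, Algebra.algebraMap_eq_smul_one]
    | add x y hx hy ihx ihy =>
      rw [map_add, ihx, ihy, map_add]
      ext i j
      fin_cases i <;> fin_cases j <;> simp
    | mul x y hx hy ihx ihy =>
      rw [map_mul, ihx, ihy, map_mul, Matrix.mul_fin_two]
      ext i j
      fin_cases i <;> fin_cases j <;> simp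
  have hinvS : ∀ s : CliffordAlgebra Q, s ∈ S → involute s ∈ S := by
    intro s hs
    rw [hS] at hs ⊢
    induction hs using Algebra.adjoin_induction with
    | mem x hx =>
      obtain ⟨w, ⟨h1, h2⟩, rfl⟩ := hx
      rw [involute_ι]
      exact neg_mem (Algebra.subset_adjoin ⟨w, ⟨h1, h2⟩, rfl⟩)
    | algebraMap r => rw [AlgHom.commutes]; exact algebraMap_mem _ r
    | add x y hx hy ihx ihy => rw [map_add]; exact add_mem ihx ihy
    | mul x y hx hy ihx ihy => rw [map_mul]; exact mul_mem ihx ihy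
  have h2x : ∀ x : CliffordAlgebra Q, (2:K)⁻¹ • (x + x) = x := by
    intro x
    rw [← two_smul K, smul_smul, inv_mul_cancel₀ hK, one_smul]
  have hMp : Φ ((2:K)⁻¹ • (1 + ι Q f * ι Q e)) = !![1,0;0,0] := by
    rw [_root_.map_smul, map_add, map_one, map_mul, hΦf, hΦe, Matrix.mul_fin_two,
      Matrix.one_fin_two]
    ext i j
    fin_cases i <;> fin_cases j <;> simp [h2x]
  have hMm : Φ ((2:K)⁻¹ • (1 - ι Q f * ι Q e)) = !![0,0;0,1] := by
    rw [_root_.map_smul, _root_.map_sub, map_one, map_mul, hΦf, hΦe, Matrix.mul_fin_two,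
      Matrix.one_fin_two]
    ext i j
    fin_cases i <;> fin_cases j <;> simp [sub_neg_eq_add, h2x]
  have hΦP : ∀ s1 s2 s3 s4 : CliffordAlgebra Q, s1 ∈ S → s2 ∈ S → s3 ∈ S → s4 ∈ S →
      Φ ((2:K)⁻¹ • (1 + ι Q f * ι Q e) * s1 +
         (2:K)⁻¹ • (1 + ι Q f * ι Q e) * ι Q e * s2 +
         (2:K)⁻¹ • (1 - ι Q f * ι Q e) * s3 +
         (2:K)⁻¹ • (1 - ι Q f * ι Q e) * ι Q e * s4)
        = !![s1, involute s2; s4, involute s3] := by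
    intro s1 s2 s3 s4 h1 h2 h3 h4
    rw [map_add, map_add, map_add, map_mul, map_mul, map_mul, map_mul, map_mul, map_mul,
      hMp, hMm, hΦe, hΦs s1 h1, hΦs s2 h2, hΦs s3 h3, hΦs s4 h4]
    ext i j
    fin_cases i <;> fin_cases j <;> simp [Matrix.mul_fin_two]
  -- existence: every element decomposes in the B-form
  have hmul : ∀ x n : CliffordAlgebra Q,
      (∃ B00 B01 B10 B11, B00 ∈ S ∧ B01 ∈ S ∧ B10 ∈ S ∧ B11 ∈ S ∧
        n = B00 + ι Q e * B01 + ι Q f * B10 + ι Q f * (ι Q e * B11)) →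
      (∃ B00 B01 B10 B11, B00 ∈ S ∧ B01 ∈ S ∧ B10 ∈ S ∧ B11 ∈ S ∧
        x * n = B00 + ι Q e * B01 + ι Q f * B10 + ι Q f * (ι Q e * B11)) := by
    intro x
    induction x using CliffordAlgebra.induction with
    | algebraMap r =>
      rintro n ⟨B00, B01, B10, B11, m0, m1, m2, m3, rfl⟩
      refine ⟨r • B00, r • B01, r • B10, r • B11, S.smul_mem m0 r, S.smul_mem m1 r,
        S.smul_mem m2 r, S.smul_mem m3 r, ?_⟩
      rw [← Algebra.smul_def]
      simp only [smul_add, mul_smul_comm]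
    | ι v =>
      rintro n hn
      obtain ⟨c₁, c₂, w, hw1, hw2, rfl⟩ := hspan v
      obtain ⟨B00, B01, B10, B11, m0, m1, m2, m3, rfl⟩ := hn
      have he_mul : ι Q e * (B00 + ι Q e * B01 + ι Q f * B10 + ι Q f * (ι Q e * B11))
          = B01 + ι Q e * B00 + ι Q f * (-B11) + ι Q f * (ι Q e * (-B10)) := by
        simp only [mul_add, hEE', hET', mul_neg, neg_neg]
        abel
      have hf_mul : ι Q f * (B00 + ι Q e * B01 + ι Q f * B10 + ι Q f * (ι Q e * B11))
          = -B10 + ι Q e * (-B11) + ι Q f * B00 + ι Q f * (ι Q e * B01) := by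
        simp only [mul_add, hTT', mul_neg, neg_neg]
        abel
      have hw_mul : ι Q w * (B00 + ι Q e * B01 + ι Q f * B10 + ι Q f * (ι Q e * B11))
          = ι Q w * B00 + ι Q e * (-(ι Q w * B01)) + ι Q f * (-(ι Q w * B10)) +
            ι Q f * (ι Q e * (ι Q w * B11)) := by
        simp only [mul_add, hwE' w hw1, hwF' w hw2, mul_neg, neg_neg]
        try abel
      have hwS : ι Q w ∈ S := hιS w hw1 hw2
      refine ⟨c₁ • B01 + c₂ • (-B10) + ι Q w * B00,
              c₁ • B00 + c₂ • (-B11) + -(ι Q w * B01),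
              c₁ • (-B11) + c₂ • B00 + -(ι Q w * B10),
              c₁ • (-B10) + c₂ • B01 + ι Q w * B11,
              add_mem (add_mem (S.smul_mem m1 c₁) (S.smul_mem (neg_mem m2) c₂)) (mul_mem hwS m0),
              add_mem (add_mem (S.smul_mem m0 c₁) (S.smul_mem (neg_mem m3) c₂)) (neg_mem (mul_mem hwS m1)),
              add_mem (add_mem (S.smul_mem (neg_mem m3) c₁) (S.smul_mem m0 c₂)) (neg_mem (mul_mem hwS m2)),
              add_mem (add_mem (S.smul_mem (neg_mem m2) c₁) (S.smul_mem m1 c₂)) (mul_mem hwS m3), ?_⟩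
      rw [map_add, map_add, _root_.map_smul, _root_.map_smul, add_mul, add_mul,
        smul_mul_assoc, smul_mul_assoc, he_mul, hf_mul, hw_mul]
      simp only [mul_add, smul_add, mul_smul_comm, mul_neg, smul_neg, neg_neg]
      abel
    | mul x y ihx ihy =>
      intro n hn
      rw [mul_assoc]
      exact ihx _ (ihy _ hn)
    | add x y ihx ihy =>
      intro n hn
      obtain ⟨B00, B01, B10, B11, m0, m1, m2, m3, hx⟩ := ihx n hn
      obtain ⟨C00, C01, C10, C11, k0, k1, k2, k3, hy⟩ := ihy n hn
      refine ⟨B00 + C00, B01 + C01, B10 + C10, B11 + C11, add_mem m0 k0, add_mem m1 k1,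
        add_mem m2 k2, add_mem m3 k3, ?_⟩
      rw [add_mul, hx, hy]
      simp only [mul_add]
      abel
  have hPa : ∃ B00 B01 B10 B11, B00 ∈ S ∧ B01 ∈ S ∧ B10 ∈ S ∧ B11 ∈ S ∧
      a = B00 + ι Q e * B01 + ι Q f * B10 + ι Q f * (ι Q e * B11) := by
    have h1 : ∃ B00 B01 B10 B11, B00 ∈ S ∧ B01 ∈ S ∧ B10 ∈ S ∧ B11 ∈ S ∧
        (1 : CliffordAlgebra Q) = B00 + ι Q e * B01 + ι Q f * B10 + ι Q f * (ι Q e * B11) :=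
      ⟨1, 0, 0, 0, one_mem _, zero_mem _, zero_mem _, zero_mem _, by simp⟩
    have h2 := hmul a 1 h1
    simpa only [mul_one] using h2
  obtain ⟨B00, B01, B10, B11, m0, m1, m2, m3, hrep⟩ := hPa
  have hrep' : a = B00 + ι Q e * B01 + ι Q f * B10 + ι Q f * ι Q e * B11 := by
    rw [hrep, mul_assoc]
  have hval : a = (2:K)⁻¹ • (1 + ι Q f * ι Q e) * (B00 + B11) +
      (2:K)⁻¹ • (1 + ι Q f * ι Q e) * ι Q e * (B01 + B10) +
      (2:K)⁻¹ • (1 - ι Q f * ι Q e) * (B00 - B11) +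
      (2:K)⁻¹ • (1 - ι Q f * ι Q e) * ι Q e * (B01 - B10) := by
    rw [stmt8_key hK (ι Q e) (ι Q f) hEE B00 B01 B10 B11]
    exact hrep'
  constructor
  · refine ⟨⟨⟨B00 + B11, add_mem m0 m3⟩, ⟨B01 + B10, add_mem m1 m2⟩,
      ⟨B00 - B11, sub_mem m0 m3⟩, ⟨B01 - B10, sub_mem m1 m2⟩⟩, hval, ?_⟩
    rintro ⟨⟨y1, n1⟩, ⟨y2, n2⟩, ⟨y3, n3⟩, ⟨y4, n4⟩⟩ hy
    have hy' : a = (2:K)⁻¹ • (1 + ι Q f * ι Q e) * y1 +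
        (2:K)⁻¹ • (1 + ι Q f * ι Q e) * ι Q e * y2 +
        (2:K)⁻¹ • (1 - ι Q f * ι Q e) * y3 +
        (2:K)⁻¹ • (1 - ι Q f * ι Q e) * ι Q e * y4 := hy
    have h1 : Φ a = !![y1, involute y2; y4, involute y3] := by
      rw [hy']
      exact hΦP y1 y2 y3 y4 n1 n2 n3 n4
    have h2 : Φ a = !![B00 + B11, involute (B01 + B10); B01 - B10, involute (B00 - B11)] := by
      rw [hval]
      exact hΦP _ _ _ _ (add_mem m0 m3) (add_mem m1 m2) (sub_mem m0 m3) (sub_mem m1 m2)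
    have h3 := h1.symm.trans h2
    have e00 : y1 = B00 + B11 := by
      have := congrFun (congrFun h3 0) 0
      simpa using this
    have e01 : y2 = B01 + B10 := by
      have h4 := congrFun (congrFun h3 0) 1
      simp at h4
      have h5 := congrArg involute h4
      simpa using h5
    have e10 : y4 = B01 - B10 := by
      have := congrFun (congrFun h3 1) 0
      simpa using this
    have e11 : y3 = B00 - B11 := by
      have h4 := congrFun (congrFun h3 1) 1
      simp at h4
      have h5 := congrArg involute h4
      simpa using h5
    refine Prod.ext (Subtype.ext e00) (Prod.ext (Subtype.ext e01)
      (Prod.ext (Subtype.ext e11) (Subtype.ext e10)))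
  · intro A00 A01 A10 A11 _ _ _ _ ha
    rw [stmt8_key hK (ι Q e) (ι Q f) hEE A00 A01 A10 A11]
    exact ha
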